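/- arXiv:2108.01546 — 2 statements merged into one kernel-verified Lean document; each statement's English description precedes it below -/
import Mathlib

section
/- Let R be a commutative ring, n ≥ 1, and let A be a symmetric n × n matrix over R whose determinant f := det(A) is a nonzerodivisor in R. Let C := coker(A : Rⁿ → Rⁿ) be the cokernel of the R-linear map given by A. Then: (a) f annihilates C, so C is a module over R̄ := R/(f); (b) the assignment (x, y) ↦ (xᵀ · adj(A) · y mod (f)), where adj(A) is the adjugate matrix of A, descends to a well-defined symmetric R̄-bilinear form C × C → R̄; and (c) the induced R̄-linear map C → Hom_{R̄}(C, R̄) is bijective. (Affine version of Lemma 4.2: the cokernel of a generically non-degenerate self-dual morphism is a symmetric sheaf, with the perfect pairing induced by the adjugate morphism q'.) -/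
/-!
Everything follows from `A * adj A = adj A * A = det A • 1`. It shows that `det A` kills the
cokernel and that `x ⬝ᵥ adj A *ᵥ y` lies in `(det A)` once `y` (or, by symmetry, `x`) lies in
the image of `A`. For perfectness, a functional on the cokernel lifts to `x ↦ c ⬝ᵥ x mod det A`;
vanishing on the image of `A = Aᵀ` means `A c = det A • d`, and cancelling the nonzerodivisor
`det A` in `adj A (A c) = det A • c` gives `c = adj A d`, i.e. the functional is pairing with `d`.
In the same way `adj A x ∈ det A • Rⁿ` forces `x ∈ A Rⁿ`, which is injectivity.
-/

open Matrix

namespace Matrix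

variable {ι R : Type*} [Fintype ι] [CommRing R]

theorem IsSymm.dotProduct_mulVec_comm {B : Matrix ι ι R} (hB : B.IsSymm) (x y : ι → R) :
    x ⬝ᵥ B *ᵥ y = B *ᵥ x ⬝ᵥ y := by
  rw [dotProduct_mulVec, ← mulVec_transpose, hB.eq]

variable [DecidableEq ι]

theorem exists_eq_mk_dotProduct (I : Ideal R) (ψ : (ι → R) →ₗ[R] R ⧸ I) :
    ∃ c : ι → R, ∀ x, ψ x = Ideal.Quotient.mk I (c ⬝ᵥ x) := by
  choose c hc using fun i => Ideal.Quotient.mk_surjective (ψ (Pi.single i 1))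
  have : ψ = (Ideal.Quotient.mkₐ R I).toLinearMap ∘ₗ dotProductBilin R R c :=
    (Pi.basisFun R ι).ext fun i => by simp [hc]
  exact ⟨c, fun x => by rw [this]; rfl⟩

theorem forall_mk_dotProduct_eq_zero_iff (f : R) (w : ι → R) :
    (∀ v, Ideal.Quotient.mk (Ideal.span {f}) (w ⬝ᵥ v) = 0) ↔ ∃ d, w = f • d := by
  simp only [Ideal.Quotient.eq_zero_iff_mem, Ideal.mem_span_singleton]
  constructor
  · intro h
    choose d hd using fun i => by simpa using h (Pi.single i 1)
    exact ⟨d, funext hd⟩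
  · rintro ⟨d, rfl⟩ v
    exact ⟨d ⬝ᵥ v, by rw [smul_dotProduct, smul_eq_mul]⟩

variable (A : Matrix ι ι R)

theorem adjugate_mulVec_mulVec (x : ι → R) : A.adjugate *ᵥ A *ᵥ x = A.det • x := by
  rw [mulVec_mulVec, adjugate_mul, smul_mulVec, one_mulVec]

theorem mulVec_adjugate_mulVec (x : ι → R) : A *ᵥ A.adjugate *ᵥ x = A.det • x := by
  rw [mulVec_mulVec, mul_adjugate, smul_mulVec, one_mulVec]

theorem det_smul_mem_range_toLin' (x : ι → R) : A.det • x ∈ LinearMap.range A.toLin' :=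
  ⟨A.adjugate *ᵥ x, A.mulVec_adjugate_mulVec x⟩

variable {A}

theorem mem_range_toLin'_iff_adjugate_mulVec (hf : A.det ∈ nonZeroDivisors R) {x : ι → R} :
    x ∈ LinearMap.range A.toLin' ↔ ∃ z, A.adjugate *ᵥ x = A.det • z := by
  constructor
  · rintro ⟨z, rfl⟩
    exact ⟨z, A.adjugate_mulVec_mulVec z⟩
  · rintro ⟨z, hz⟩
    refine ⟨z, Module.Flat.isSMulRegular_of_nonZeroDivisors hf ?_⟩
    change A.det • (A *ᵥ z) = A.det • x
    rw [← mulVec_smul, ← hz, mulVec_adjugate_mulVec]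

variable (A)

noncomputable def adjugateForm : (ι → R) →ₗ[R] (ι → R) →ₗ[R] R ⧸ Ideal.span {A.det} :=
  (toLinearMap₂' R A.adjugate).compr₂ (Ideal.Quotient.mkₐ R _).toLinearMap

@[simp]
theorem adjugateForm_apply (x y : ι → R) :
    A.adjugateForm x y = Ideal.Quotient.mk _ (x ⬝ᵥ A.adjugate *ᵥ y) := by
  simp [adjugateForm, toLinearMap₂'_apply']

theorem range_toLin'_le_ker_flip_adjugateForm :
    LinearMap.range A.toLin' ≤ LinearMap.ker A.adjugateForm.flip := by
  rintro _ ⟨z, rfl⟩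
  refine LinearMap.ext fun x => ?_
  rw [LinearMap.flip_apply, adjugateForm_apply, toLin'_apply, adjugate_mulVec_mulVec,
    dotProduct_smul, smul_eq_mul, LinearMap.zero_apply, Ideal.Quotient.eq_zero_iff_mem]
  exact Ideal.mul_mem_right _ _ (Ideal.mem_span_singleton_self _)

variable {A}

theorem IsSymm.adjugateForm_comm (hA : A.IsSymm) (x y : ι → R) :
    A.adjugateForm x y = A.adjugateForm y x := by
  rw [adjugateForm_apply, adjugateForm_apply, hA.adjugate.dotProduct_mulVec_comm, dotProduct_comm]

theorem IsSymm.range_toLin'_le_ker_adjugateForm (hA : A.IsSymm) :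
    LinearMap.range A.toLin' ≤ LinearMap.ker A.adjugateForm := by
  intro v hv
  refine LinearMap.ext fun x => ?_
  rw [hA.adjugateForm_comm]
  exact LinearMap.congr_fun (range_toLin'_le_ker_flip_adjugateForm A hv) x

variable (A)

noncomputable def cokerPairing (hA : A.IsSymm) :
    (ι → R) ⧸ LinearMap.range A.toLin' →ₗ[R] (ι → R) ⧸ LinearMap.range A.toLin' →ₗ[R]
      R ⧸ Ideal.span {A.det} :=
  A.adjugateForm.liftQ₂ _ _ hA.range_toLin'_le_ker_adjugateForm
    (range_toLin'_le_ker_flip_adjugateForm A)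

variable {A}

@[simp]
theorem cokerPairing_mk (hA : A.IsSymm) (x y : ι → R) :
    cokerPairing A hA (Submodule.Quotient.mk x) (Submodule.Quotient.mk y) =
      Ideal.Quotient.mk _ (x ⬝ᵥ A.adjugate *ᵥ y) :=
  adjugateForm_apply A x y

theorem cokerPairing_comm (hA : A.IsSymm) (u v : (ι → R) ⧸ LinearMap.range A.toLin') :
    cokerPairing A hA u v = cokerPairing A hA v u := by
  induction u using Submodule.Quotient.induction_on
  induction v using Submodule.Quotient.induction_on
  exact hA.adjugateForm_comm _ _

theorem cokerPairing_injective (hA : A.IsSymm) (hf : A.det ∈ nonZeroDivisors R) :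
    Function.Injective (cokerPairing A hA) := by
  refine (injective_iff_map_eq_zero _).2 fun u hu => ?_
  obtain ⟨x, rfl⟩ := Submodule.Quotient.mk_surjective _ u
  have hx : ∀ y, Ideal.Quotient.mk _ (A.adjugate *ᵥ x ⬝ᵥ y) = 0 := fun y => by
    rw [← hA.adjugate.dotProduct_mulVec_comm, ← cokerPairing_mk hA, hu, LinearMap.zero_apply]
  rw [Submodule.Quotient.mk_eq_zero, mem_range_toLin'_iff_adjugate_mulVec hf]
  exact (forall_mk_dotProduct_eq_zero_iff _ _).1 hx

theorem cokerPairing_surjective (hA : A.IsSymm) (hf : A.det ∈ nonZeroDivisors R) :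
    Function.Surjective (cokerPairing A hA) := by
  intro ψ
  obtain ⟨c, hc⟩ := exists_eq_mk_dotProduct _ (ψ ∘ₗ (LinearMap.range A.toLin').mkQ)
  have hAc : ∀ z, Ideal.Quotient.mk _ (A *ᵥ c ⬝ᵥ z) = 0 := fun z => by
    rw [← hA.dotProduct_mulVec_comm, ← hc, LinearMap.comp_apply, Submodule.mkQ_apply]
    exact (congrArg ψ ((Submodule.Quotient.mk_eq_zero _).2 ⟨z, rfl⟩)).trans (map_zero ψ)
  obtain ⟨d, hd⟩ := (forall_mk_dotProduct_eq_zero_iff _ _).1 hAc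
  have hdc : A.adjugate *ᵥ d = c := Module.Flat.isSMulRegular_of_nonZeroDivisors hf <|
    show A.det • _ = A.det • c by rw [← mulVec_smul, ← hd, adjugate_mulVec_mulVec]
  refine ⟨Submodule.Quotient.mk d, LinearMap.ext fun u => ?_⟩
  obtain ⟨x, rfl⟩ := Submodule.Quotient.mk_surjective _ u
  rw [cokerPairing_mk, hA.adjugate.dotProduct_mulVec_comm, hdc, ← hc]
  rfl

end Matrix

theorem coker_of_symmetric_matrix_selfdual_general
    {R : Type*} [CommRing R] (n : ℕ)
    (A : Matrix (Fin n) (Fin n) R) (hA : A.IsSymm)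
    (hf : A.det ∈ nonZeroDivisors R) :
    -- (a) `det A` annihilates the cokernel `C`
    (∀ c : (Fin n → R) ⧸ LinearMap.range (Matrix.toLin' A), A.det • c = 0) ∧
    -- (b), (c): the adjugate pairing descends to a perfect symmetric bilinear form on `C`
    -- with values in `R/(det A)`
    ∃ β : ((Fin n → R) ⧸ LinearMap.range (Matrix.toLin' A)) →ₗ[R]
          ((Fin n → R) ⧸ LinearMap.range (Matrix.toLin' A)) →ₗ[R]
          (R ⧸ Ideal.span {A.det}),
      (∀ x y : Fin n → R,
        β (Submodule.Quotient.mk x) (Submodule.Quotient.mk y)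
          = Ideal.Quotient.mk (Ideal.span {A.det}) (x ⬝ᵥ (A.adjugate *ᵥ y))) ∧
      (∀ u v, β u v = β v u) ∧
      Function.Bijective
        (fun u : (Fin n → R) ⧸ LinearMap.range (Matrix.toLin' A) => β u) := by
  refine ⟨fun c => ?_, cokerPairing A hA, cokerPairing_mk hA, cokerPairing_comm hA,
    cokerPairing_injective hA hf, cokerPairing_surjective hA hf⟩
  induction c using Submodule.Quotient.induction_on with
  | H x =>
    rw [← Submodule.Quotient.mk_smul, Submodule.Quotient.mk_eq_zero]
    exact A.det_smul_mem_range_toLin' x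

/-- Let `R` be a commutative ring, `n ≥ 1`, and `A` a symmetric `n × n` matrix
over `R` whose determinant `f := det A` is a nonzerodivisor. Let `C := coker(A : Rⁿ → Rⁿ)`.
Then: (a) `f` annihilates `C`; (b) `(x, y) ↦ xᵀ ⬝ adj(A) ⬝ y mod (f)` descends to a
well-defined symmetric `R/(f)`-bilinear form on `C`; and (c) the induced map
`C → Hom(C, R/(f))` is bijective. -/
theorem coker_of_symmetric_matrix_selfdual
    {R : Type*} [CommRing R] (n : ℕ) (hn : 1 ≤ n)
    (A : Matrix (Fin n) (Fin n) R) (hA : A.IsSymm)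
    (hf : A.det ∈ nonZeroDivisors R) :
    -- (a) `det A` annihilates the cokernel `C`
    (∀ c : (Fin n → R) ⧸ LinearMap.range (Matrix.toLin' A), A.det • c = 0) ∧
    -- (b), (c): the adjugate pairing descends to a perfect symmetric bilinear form on `C`
    -- with values in `R/(det A)`
    ∃ β : ((Fin n → R) ⧸ LinearMap.range (Matrix.toLin' A)) →ₗ[R]
          ((Fin n → R) ⧸ LinearMap.range (Matrix.toLin' A)) →ₗ[R]
          (R ⧸ Ideal.span {A.det}),
      (∀ x y : Fin n → R,
        β (Submodule.Quotient.mk x) (Submodule.Quotient.mk y)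
          = Ideal.Quotient.mk (Ideal.span {A.det}) (x ⬝ᵥ (A.adjugate *ᵥ y))) ∧
      (∀ u v, β u v = β v u) ∧
      Function.Bijective
        (fun u : (Fin n → R) ⧸ LinearMap.range (Matrix.toLin' A) => β u) :=
  coker_of_symmetric_matrix_selfdual_general n A hA hf
end

section
/- Let R be a commutative ring and let A be a symmetric n × n matrix over R whose determinant det(A) is a nonzerodivisor in R. Let C := coker(A : Rⁿ → Rⁿ). Then Hom_R(C, R) = 0, and there is an isomorphism of R-modules Ext¹_R(C, R) ≅ C. (Affine version of Lemma 4.1: a symmetric sheaf C admits a self-dual isomorphism C^∨ ≅ C(m)[-1], i.e. its only nonvanishing local Ext against the structure sheaf is Ext¹, which is isomorphic to C itself, and C has projective dimension 1.) -/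
/-!
Since `det A` is a nonzerodivisor, `A` is injective, so `0 → Rⁿ → Rⁿ → C → 0` is a free
resolution of `C`. Applying `Hom(-, R)` and identifying `Hom(Rⁿ, R)` with `Rⁿ` through the dot
product turns `A` into `Aᵀ = A`, so `Hom(C, R) = ker Aᵀ = 0` and `Ext¹(C, R) = coker Aᵀ = C`.
-/

open CategoryTheory Limits ZeroObject

universe v u

noncomputable def CochainComplex.homologySuccIsoRangeQuotient {R : Type u} [Ring R]
    (K : CochainComplex (ModuleCat.{v} R) ℕ) (n : ℕ) (h : K.d (n + 1) (n + 2) = 0) :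
    K.homology (n + 1) ≅ ModuleCat.of R (K.X (n + 1) ⧸ LinearMap.range (K.d n (n + 1)).hom) :=
  K.homologyIsoSc' n (n + 1) (n + 2) (by simp) (by simp) ≪≫
    (ShortComplex.LeftHomologyData.ofIsColimitCokernelCofork _ h _
      (ModuleCat.cokernelIsColimit _)).homologyIso

namespace CategoryTheory.ShortComplex

variable {C : Type*} [Category* C] [Abelian C] (S : ShortComplex C)

noncomputable def twoTermComplex : ChainComplex C ℕ :=
  ChainComplex.of (fun | 0 => S.X₂ | 1 => S.X₁ | _ + 2 => 0) (fun | 0 => S.f | _ + 1 => 0)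
    (fun _ => zero_comp)

@[simp]
lemma twoTermComplex_d_one_zero : S.twoTermComplex.d 1 0 = S.f := by
  simp [twoTermComplex, ChainComplex.of.d]

lemma isZero_twoTermComplex_X (k : ℕ) : IsZero (S.twoTermComplex.X (k + 2)) :=
  isZero_zero C

noncomputable def twoTermComplexπ : S.twoTermComplex ⟶ (ChainComplex.single₀ C).obj S.X₃ :=
  (ChainComplex.toSingle₀Equiv _ _).symm ⟨S.g, by rw [twoTermComplex_d_one_zero]; exact S.zero⟩

lemma twoTermComplexπ_f_zero : S.twoTermComplexπ.f 0 = S.g :=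
  ChainComplex.toSingle₀Equiv_symm_apply_f_zero _ _

variable {S}

lemma ShortExact.twoTermComplex_exactAt_succ (hS : S.ShortExact) (k : ℕ) :
    S.twoTermComplex.ExactAt (k + 1) := by
  rw [HomologicalComplex.exactAt_iff' _ (k + 2) (k + 1) k (by simp) (by simp)]
  match k with
  | 0 =>
    rw [ShortComplex.exact_iff_mono _ ((S.isZero_twoTermComplex_X 0).eq_of_src _ _)]
    change Mono (S.twoTermComplex.d 1 0)
    rw [twoTermComplex_d_one_zero]
    exact hS.mono_f
  | k + 1 => exact ShortComplex.exact_of_isZero_X₂ _ (S.isZero_twoTermComplex_X k)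

lemma ShortExact.quasiIso_twoTermComplexπ (hS : S.ShortExact) :
    _root_.QuasiIso S.twoTermComplexπ where
  quasiIsoAt
    | 0 => by
      rw [ChainComplex.quasiIsoAt₀_iff, ShortComplex.quasiIso_iff_of_zeros']
      · refine (ShortComplex.exact_and_epi_g_iff_of_iso ?_).2 ⟨hS.exact, hS.epi_g⟩
        refine ShortComplex.isoMk (Iso.refl _) (Iso.refl _) (Iso.refl _) ?_ ?_
        · erw [Category.id_comp, Category.comp_id]
          exact S.twoTermComplex_d_one_zero.symm
        · erw [Category.id_comp, Category.comp_id]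
          exact S.twoTermComplexπ_f_zero.symm
      all_goals rfl
    | k + 1 => by
      rw [quasiIsoAt_iff_exactAt' _ _ (ChainComplex.exactAt_succ_single_obj _ _)]
      exact hS.twoTermComplex_exactAt_succ k

noncomputable def ShortExact.projectiveResolution (hS : S.ShortExact) [Projective S.X₁]
    [Projective S.X₂] : ProjectiveResolution S.X₃ where
  complex := S.twoTermComplex
  projective
    | 0 => inferInstanceAs (Projective S.X₂)
    | 1 => inferInstanceAs (Projective S.X₁)
    | k + 2 => (S.isZero_twoTermComplex_X k).projective
  π := S.twoTermComplexπ
  quasiIso := hS.quasiIso_twoTermComplexπ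

variable (R : Type*) [Ring R] [Linear R C] [EnoughProjectives C]

noncomputable def ShortExact.extOneLinearEquiv (hS : S.ShortExact) [Projective S.X₁]
    [Projective S.X₂] (Y : C) :
    ((Ext R C 1).obj (Opposite.op S.X₃)).obj Y ≃ₗ[R]
      (S.X₁ ⟶ Y) ⧸ LinearMap.range (Linear.leftComp R Y S.f) :=
  ((hS.projectiveResolution.isoExt 1 Y) ≪≫
    CochainComplex.homologySuccIsoRangeQuotient _ 0
      ((((linearYoneda R C).obj Y).map_isZero (S.isZero_twoTermComplex_X 0).op).eq_of_tgt _ _)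
    ).toLinearEquiv.trans
    (Submodule.quotEquivOfEq _ _
      (congrArg (fun f ↦ LinearMap.range (Linear.leftComp R Y f)) S.twoTermComplex_d_one_zero))

end CategoryTheory.ShortComplex

noncomputable def ModuleCat.dualPiEquiv (R : Type*) [CommRing R] (n : Type) [Fintype n]
    [DecidableEq n] : (ModuleCat.of R (n → R) ⟶ ModuleCat.of R R) ≃ₗ[R] (n → R) :=
  ModuleCat.homLinearEquiv ≪≫ₗ (dotProductEquiv R n).symm

namespace Matrix

variable {R : Type*} [CommRing R]

section

variable {m n : Type*} [Fintype m] [Fintype n] [DecidableEq m] [DecidableEq n]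

lemma dotProductEquiv_comp_toLin' (A : Matrix m n R) (v : m → R) :
    dotProductEquiv R m v ∘ₗ A.toLin' = dotProductEquiv R n (v ᵥ* A) :=
  LinearMap.ext fun x => by simp [dotProduct_mulVec]

theorem dual_quotient_range_toLin'_eq_zero {A : Matrix n n R} (hA : A.det ∈ nonZeroDivisors R)
    (φ : Module.Dual R ((n → R) ⧸ LinearMap.range A.toLin')) : φ = 0 := by
  obtain ⟨v, hv⟩ := (dotProductEquiv R n).surjective (φ ∘ₗ (LinearMap.range A.toLin').mkQ)
  have hvA : v ᵥ* A = 0 := (dotProductEquiv R n).injective <| by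
    rw [← dotProductEquiv_comp_toLin', hv, LinearMap.comp_assoc, LinearMap.range_mkQ_comp,
      LinearMap.comp_zero, map_zero]
  have hv0 : v = 0 := eq_zero_of_det_mem_nonZeroDivisors_of_vecMul_eq_zero hA hvA
  refine Submodule.linearMap_qext _ ?_
  rw [← hv, hv0, map_zero, LinearMap.zero_comp]

end

variable {n : Type} [Fintype n] [DecidableEq n] (A : Matrix n n R)

noncomputable abbrev cokernelShortComplex : ShortComplex (ModuleCat R) :=
  ModuleCat.shortComplexOfCompEqZero A.toLin' (LinearMap.range A.toLin').mkQ
    (LinearMap.range_mkQ_comp _)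

lemma shortExact_cokernelShortComplex {A : Matrix n n R} (hA : A.det ∈ nonZeroDivisors R) :
    A.cokernelShortComplex.ShortExact :=
  ModuleCat.shortComplex_shortExact _ (LinearMap.exact_map_mkQ_range _)
    (mulVec_injective_of_det_mem_nonZeroDivisors hA) (Submodule.mkQ_surjective _)

lemma dualPiEquiv_comp_leftComp :
    (ModuleCat.dualPiEquiv R n).toLinearMap ∘ₗ
        Linear.leftComp R (ModuleCat.of R R) (ModuleCat.ofHom A.toLin') =
      Aᵀ.toLin' ∘ₗ (ModuleCat.dualPiEquiv R n).toLinearMap := by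
  refine LinearMap.ext fun φ => (dotProductEquiv R n).injective ?_
  simp only [ModuleCat.dualPiEquiv, LinearMap.coe_comp, LinearEquiv.coe_coe, Function.comp_apply,
    Linear.leftComp_apply, LinearEquiv.trans_apply, LinearEquiv.apply_symm_apply, toLin'_apply,
    mulVec_transpose, ← dotProductEquiv_comp_toLin']
  rfl

noncomputable def quotientRangeLeftCompEquiv :
    ((ModuleCat.of R (n → R) ⟶ ModuleCat.of R R) ⧸
        LinearMap.range (Linear.leftComp R (ModuleCat.of R R) (ModuleCat.ofHom A.toLin'))) ≃ₗ[R]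
      (n → R) ⧸ LinearMap.range Aᵀ.toLin' :=
  Submodule.Quotient.equiv _ _ (ModuleCat.dualPiEquiv R n) <| by
    rw [← LinearMap.range_comp, dualPiEquiv_comp_leftComp,
      LinearMap.range_comp_of_range_eq_top _ (LinearEquiv.range _)]

end Matrix

/-- Let `R` be a commutative ring and `A` a symmetric `n × n` matrix over `R`
whose determinant is a nonzerodivisor. Let `C := coker(A : Rⁿ → Rⁿ)`. Then `Hom_R(C, R) = 0`
and there is an isomorphism of `R`-modules `Ext¹_R(C, R) ≅ C`. -/
theorem hom_eq_zero_and_ext_one_iso_coker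
    {R : Type*} [CommRing R] (n : ℕ)
    (A : Matrix (Fin n) (Fin n) R) (hA : A.IsSymm)
    (hf : A.det ∈ nonZeroDivisors R) :
    (∀ φ : ((Fin n → R) ⧸ LinearMap.range (Matrix.toLin' A)) →ₗ[R] R, φ = 0) ∧
    Nonempty
      ((((Ext R (ModuleCat R) 1).obj
          (Opposite.op (ModuleCat.of R
            ((Fin n → R) ⧸ LinearMap.range (Matrix.toLin' A))))).obj
        (ModuleCat.of R R)) ≃ₗ[R]
        ((Fin n → R) ⧸ LinearMap.range (Matrix.toLin' A))) := by
  refine ⟨Matrix.dual_quotient_range_toLin'_eq_zero hf, ⟨?_⟩⟩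
  exact (Matrix.shortExact_cokernelShortComplex hf).extOneLinearEquiv R (ModuleCat.of R R) ≪≫ₗ
    A.quotientRangeLeftCompEquiv ≪≫ₗ Submodule.quotEquivOfEq _ _ (by rw [hA.eq])
end
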